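/- arXiv:2005.13530 — 4 statements merged into one kernel-verified Lean document; each statement's English description precedes it below -/
import Mathlib

section
/- If π is a Borel probability measure on ℝ × ℝ^d × ℝ with finite second moment N(π) = ∫ (a² + |w|² + b²) dπ, then the realization f_π(x) = ∫ a·max(wᵀx+b,0) dπ(a,w,b) is well-defined and Lipschitz continuous on ℝ^d with Lipschitz constant at most N(π). -/
/-!
By `2|a|‖w‖ ≤ a² + ‖w‖²` and `2|a||b| ≤ a² + b²`, a single neuron `x ↦ a * max (⟪w, x⟫ + b) 0`
is bounded by `(‖x‖ + 1) * (a² + ‖w‖² + b²)` and is `(a² + ‖w‖² + b²)`-Lipschitz, since `max · 0`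
is 1-Lipschitz. The first bound makes the integrand integrable, and integrating the second gives
the Lipschitz constant of the realization.
-/

open MeasureTheory

theorem lipschitzWith_integral_of_dist_le {α X E : Type*} [MeasurableSpace α] {μ : Measure α}
    [PseudoMetricSpace X] [NormedAddCommGroup E] [NormedSpace ℝ E]
    {F : X → α → E} {K : α → ℝ} (hF : ∀ x, Integrable (F x) μ) (hK : Integrable K μ)
    (hFK : ∀ a x y, dist (F x a) (F y a) ≤ K a * dist x y) :
    LipschitzWith (∫ a, K a ∂μ).toNNReal fun x => ∫ a, F x a ∂μ := by
  refine LipschitzWith.of_dist_le_mul fun x y => ?_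
  calc dist (∫ a, F x a ∂μ) (∫ a, F y a ∂μ)
      = ‖∫ a, (F x a - F y a) ∂μ‖ := by rw [dist_eq_norm, integral_sub (hF x) (hF y)]
    _ ≤ ∫ a, K a * dist x y ∂μ := by
        refine norm_integral_le_of_norm_le (hK.mul_const _) (ae_of_all _ fun a => ?_)
        simpa only [dist_eq_norm] using hFK a x y
    _ = (∫ a, K a ∂μ) * dist x y := integral_mul_const _ _
    _ ≤ (∫ a, K a ∂μ).toNNReal * dist x y :=
        mul_le_mul_of_nonneg_right (Real.le_coe_toNNReal _) dist_nonneg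

section SecondMoment

variable {E : Type*} [Norm E]

def secondMoment (θ : ℝ × E × ℝ) : ℝ := θ.1 ^ 2 + ‖θ.2.1‖ ^ 2 + θ.2.2 ^ 2

theorem abs_mul_norm_le_secondMoment (θ : ℝ × E × ℝ) : |θ.1| * ‖θ.2.1‖ ≤ secondMoment θ := by
  unfold secondMoment
  nlinarith [two_mul_le_add_sq |θ.1| ‖θ.2.1‖, sq_abs θ.1, sq_nonneg θ.2.2]

theorem abs_mul_abs_le_secondMoment (θ : ℝ × E × ℝ) : |θ.1| * |θ.2.2| ≤ secondMoment θ := by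
  unfold secondMoment
  nlinarith [two_mul_le_add_sq |θ.1| |θ.2.2|, sq_abs θ.1, sq_abs θ.2.2, sq_nonneg ‖θ.2.1‖]

end SecondMoment

section Neuron

variable {E : Type*} [NormedAddCommGroup E] [InnerProductSpace ℝ E]

def neuron (θ : ℝ × E × ℝ) (x : E) : ℝ := θ.1 * max (inner ℝ θ.2.1 x + θ.2.2) 0

theorem abs_neuron_le (θ : ℝ × E × ℝ) (x : E) : |neuron θ x| ≤ (‖x‖ + 1) * secondMoment θ := by
  have hrelu : |max (inner ℝ θ.2.1 x + θ.2.2) 0| ≤ ‖θ.2.1‖ * ‖x‖ + |θ.2.2| :=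
    calc |max (inner ℝ θ.2.1 x + θ.2.2) 0| ≤ |inner ℝ θ.2.1 x + θ.2.2| := by
          simpa only [max_self, sub_zero] using abs_max_sub_max_le_abs (inner ℝ θ.2.1 x + θ.2.2) 0 0
      _ ≤ |inner ℝ θ.2.1 x| + |θ.2.2| := abs_add_le _ _
      _ ≤ ‖θ.2.1‖ * ‖x‖ + |θ.2.2| := by gcongr; exact abs_real_inner_le_norm _ _
  calc |neuron θ x| ≤ |θ.1| * (‖θ.2.1‖ * ‖x‖ + |θ.2.2|) := by
        rw [neuron, abs_mul]; gcongr
    _ = |θ.1| * ‖θ.2.1‖ * ‖x‖ + |θ.1| * |θ.2.2| := by ring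
    _ ≤ secondMoment θ * ‖x‖ + secondMoment θ := by
        gcongr
        · exact abs_mul_norm_le_secondMoment θ
        · exact abs_mul_abs_le_secondMoment θ
    _ = (‖x‖ + 1) * secondMoment θ := by ring

theorem dist_neuron_le (θ : ℝ × E × ℝ) (x y : E) :
    dist (neuron θ x) (neuron θ y) ≤ secondMoment θ * dist x y :=
  calc dist (neuron θ x) (neuron θ y)
      = |θ.1| * |max (inner ℝ θ.2.1 x + θ.2.2) 0 - max (inner ℝ θ.2.1 y + θ.2.2) 0| := by
        rw [Real.dist_eq, neuron, neuron, ← mul_sub, abs_mul]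
    _ ≤ |θ.1| * |inner ℝ θ.2.1 (x - y)| := by
        refine mul_le_mul_of_nonneg_left ?_ (abs_nonneg _)
        simpa only [inner_sub_right, add_sub_add_right_eq_sub] using
          abs_max_sub_max_le_abs (inner ℝ θ.2.1 x + θ.2.2) (inner ℝ θ.2.1 y + θ.2.2) 0
    _ ≤ |θ.1| * ‖θ.2.1‖ * dist x y := by
        rw [mul_assoc, dist_eq_norm]; gcongr; exact abs_real_inner_le_norm _ _
    _ ≤ secondMoment θ * dist x y := by gcongr; exact abs_mul_norm_le_secondMoment θ

variable [MeasurableSpace E] [OpensMeasurableSpace E] [SecondCountableTopology E]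

theorem integrable_neuron {μ : Measure (ℝ × E × ℝ)} (hμ : Integrable secondMoment μ) (x : E) :
    Integrable (fun θ => neuron θ x) μ := by
  have hcont : Continuous fun θ : ℝ × E × ℝ => neuron θ x := by unfold neuron; fun_prop
  refine (hμ.const_mul (‖x‖ + 1)).mono hcont.aestronglyMeasurable (ae_of_all _ fun θ => ?_)
  rw [Real.norm_eq_abs, Real.norm_eq_abs]
  exact (abs_neuron_le θ x).trans (le_abs_self _)

end Neuron

theorem realization_lipschitz_general (d : ℕ)
    (π : Measure (ℝ × EuclideanSpace ℝ (Fin d) × ℝ))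
    (hmom : Integrable (fun θ : ℝ × EuclideanSpace ℝ (Fin d) × ℝ =>
      θ.1 ^ 2 + ‖θ.2.1‖ ^ 2 + θ.2.2 ^ 2) π) :
    (∀ x : EuclideanSpace ℝ (Fin d),
      Integrable (fun θ : ℝ × EuclideanSpace ℝ (Fin d) × ℝ =>
        θ.1 * max (inner ℝ θ.2.1 x + θ.2.2) 0) π) ∧
    LipschitzWith (Real.toNNReal (∫ θ, (θ.1 ^ 2 + ‖θ.2.1‖ ^ 2 + θ.2.2 ^ 2) ∂π))
      (fun x : EuclideanSpace ℝ (Fin d) =>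
        ∫ θ, θ.1 * max (inner ℝ θ.2.1 x + θ.2.2) 0 ∂π) :=
  ⟨integrable_neuron hmom,
    lipschitzWith_integral_of_dist_le (integrable_neuron hmom) hmom dist_neuron_le⟩

/-- If `π` is a Borel probability measure on `ℝ × ℝ^d × ℝ` with finite second
moment `N(π) = ∫ (a² + |w|² + b²) dπ`, then the realization
`f_π(x) = ∫ a·max(wᵀx+b,0) dπ` is well-defined (the integrand is integrable for
every `x`) and Lipschitz continuous with Lipschitz constant at most `N(π)`. -/
theorem realization_lipschitz (d : ℕ)
    (π : Measure (ℝ × EuclideanSpace ℝ (Fin d) × ℝ)) [IsProbabilityMeasure π]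
    (hmom : Integrable (fun θ : ℝ × EuclideanSpace ℝ (Fin d) × ℝ =>
      θ.1 ^ 2 + ‖θ.2.1‖ ^ 2 + θ.2.2 ^ 2) π) :
    (∀ x : EuclideanSpace ℝ (Fin d),
      Integrable (fun θ : ℝ × EuclideanSpace ℝ (Fin d) × ℝ =>
        θ.1 * max (inner ℝ θ.2.1 x + θ.2.2) 0) π) ∧
    LipschitzWith (Real.toNNReal (∫ θ, (θ.1 ^ 2 + ‖θ.2.1‖ ^ 2 + θ.2.2 ^ 2) ∂π))
      (fun x : EuclideanSpace ℝ (Fin d) =>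
        ∫ θ, θ.1 * max (inner ℝ θ.2.1 x + θ.2.2) 0 ∂π) :=
  realization_lipschitz_general d π hmom
end

section
/- Suppose θ(t) = (a(t), w(t), b(t)) is a differentiable curve in ℝ × ℝ^d × ℝ satisfying ȧ = σ(wᵀx+b)·c, ẇ = a·σ'(wᵀx+b)·x·c, ḃ = a·σ'(wᵀx+b)·c for a fixed x ∈ ℝ^d and scalar c, where σ(z)=max(z,0), σ'(z)=1_{z>0}. Then the Minkowski quantity -a² + |w|² + b² is constant along the curve. -/
/-!
Write `z = ⟪w, x⟫ + b`. The derivative of `-a² + ‖w‖² + b²` along the flow is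
`2ac (σ'(z) z - σ(z))`, which vanishes because ReLU is positively homogeneous:
`σ'(z) z = σ(z)`.
-/

open RealInnerProductSpace

theorem ite_pos_one_zero_mul_self (z : ℝ) : (if 0 < z then (1 : ℝ) else 0) * z = max z 0 := by
  split_ifs with hz
  · simp [hz.le]
  · simp [not_lt.mp hz]

theorem HasDerivAt.neg_sq_add_norm_sq_add_sq {F : Type*} [NormedAddCommGroup F]
    [InnerProductSpace ℝ F] {a b : ℝ → ℝ} {w : ℝ → F} {a' b' t : ℝ} {w' : F}
    (ha : HasDerivAt a a' t) (hw : HasDerivAt w w' t) (hb : HasDerivAt b b' t) :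
    HasDerivAt (fun t => -(a t) ^ 2 + ‖w t‖ ^ 2 + (b t) ^ 2)
      (2 * (-(a t * a') + ⟪w t, w'⟫ + b t * b')) t := by
  refine (((ha.fun_pow 2).fun_neg.fun_add hw.norm_sq).fun_add (hb.fun_pow 2)).congr_deriv ?_
  ring

/-- Along the (formal) single-neuron gradient flow
`ȧ = σ(wᵀx+b)·c`, `ẇ = a·σ'(wᵀx+b)·c·x`, `ḃ = a·σ'(wᵀx+b)·c`,
where `σ = ReLU` and `σ'(z) = 1_{z>0}`, the Minkowski quantity
`-a² + |w|² + b²` is constant. -/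
theorem minkowski_invariant (d : ℕ) (x : EuclideanSpace ℝ (Fin d)) (c : ℝ)
    (a : ℝ → ℝ) (w : ℝ → EuclideanSpace ℝ (Fin d)) (b : ℝ → ℝ)
    (ha : ∀ t, HasDerivAt a (max (inner ℝ (w t) x + b t) 0 * c) t)
    (hw : ∀ t, HasDerivAt w
      ((a t * (if 0 < inner ℝ (w t) x + b t then (1 : ℝ) else 0) * c) • x) t)
    (hb : ∀ t, HasDerivAt b
      (a t * (if 0 < inner ℝ (w t) x + b t then (1 : ℝ) else 0) * c) t) :
    ∀ s t : ℝ, -(a s) ^ 2 + ‖w s‖ ^ 2 + (b s) ^ 2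
      = -(a t) ^ 2 + ‖w t‖ ^ 2 + (b t) ^ 2 := by
  have hderiv : ∀ t, HasDerivAt (fun t => -(a t) ^ 2 + ‖w t‖ ^ 2 + (b t) ^ 2) 0 t := by
    intro t
    convert (ha t).neg_sq_add_norm_sq_add_sq (hw t) (hb t) using 1
    have hrelu := ite_pos_one_zero_mul_self (⟪w t, x⟫ + b t)
    rw [real_inner_smul_right, ← hrelu]
    ring
  exact is_const_of_deriv_eq_zero (fun t => (hderiv t).differentiableAt)
    (fun t => (hderiv t).deriv)
end

section
/- Let N : [0,∞) → [0,∞) and R : [0,∞) → [0,∞) be differentiable, with R monotone decreasing, and suppose (d/dt)√(N(t)) ≤ |R'(t)|^{1/2} for all t. Then N(t) ≤ 2[N(T) + (t−T)(R(T) − R(t))] for all 0 ≤ T ≤ t, and consequently lim_{t→∞} N(t)/t = 0. -/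
open Filter

/-- Abstract sublinear moment-growth estimate: if `N, R : [0,∞) → [0,∞)` are
differentiable, `R` is nonincreasing, and `(d/dt)√N(t) ≤ |R'(t)|^{1/2}`, then
`N(t) ≤ 2[N(T) + (t-T)(R(T) - R(t))]` for `0 ≤ T ≤ t` and `N(t)/t → 0`. -/
theorem sublinear_moment_growth (N R : ℝ → ℝ)
    (hN : Differentiable ℝ N) (hR : Differentiable ℝ R)
    (hNpos : ∀ t, 0 ≤ t → 0 ≤ N t) (hRpos : ∀ t, 0 ≤ t → 0 ≤ R t)
    (hRmono : ∀ s t, 0 ≤ s → s ≤ t → R t ≤ R s)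
    (hdiss : ∀ t, 0 ≤ t →
      deriv (fun s => Real.sqrt (N s)) t ≤ Real.sqrt |deriv R t|) :
    (∀ T t, 0 ≤ T → T ≤ t → N t ≤ 2 * (N T + (t - T) * (R T - R t))) ∧
    Tendsto (fun t => N t / t) atTop (nhds 0) := by
  -- deriv R is nonpositive on (0, ∞)
  have hR' : ∀ s : ℝ, 0 < s → deriv R s ≤ 0 := by
    intro s hs
    have hd : Tendsto (slope R s) (nhdsWithin s {s}ᶜ) (nhds (deriv R s)) :=
      hasDerivAt_iff_tendsto_slope.1 (hR s).hasDerivAt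
    have hsub : Set.Ioi s ⊆ {s}ᶜ := fun y hy => Set.mem_compl_singleton_iff.mpr (ne_of_gt hy)
    have hd' : Tendsto (slope R s) (nhdsWithin s (Set.Ioi s)) (nhds (deriv R s)) :=
      hd.mono_left (nhdsWithin_mono s hsub)
    refine le_of_tendsto hd' ?_
    filter_upwards [self_mem_nhdsWithin] with y hy
    have hy' : s < y := hy
    have hRy : R y ≤ R s := hRmono s y hs.le hy'.le
    rw [slope_def_field]
    exact div_nonpos_of_nonpos_of_nonneg (by linarith) (by linarith)
  -- key sqrt estimate
  have keyA : ∀ c : ℝ, 0 < c → ∀ T t : ℝ, 0 ≤ T → T ≤ t →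
      Real.sqrt (N t) ≤ Real.sqrt (N T) + ((R T - R t) / (2*c) + c/2 * (t - T)) := by
    intro c hc T t hT hTt
    refine le_of_forall_pos_le_add fun ε hε => ?_
    set h : ℝ → ℝ := fun s => Real.sqrt (N s + ε^2) + R s / (2*c) - c/2 * s with hh
    have Hs : ∀ s : ℝ, 0 < s → HasDerivAt h
        (deriv N s / (2 * Real.sqrt (N s + ε^2)) + deriv R s / (2*c) - c/2) s := by
      intro s hs
      have h1 : HasDerivAt (fun y => N y + ε^2) (deriv N s) s :=
        ((hN s).hasDerivAt).add_const _
      have hpos : N s + ε^2 ≠ 0 := by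
        have := hNpos s hs.le; positivity
      have h2 := h1.sqrt hpos
      have h3 : HasDerivAt (fun y => R y / (2*c)) (deriv R s / (2*c)) s :=
        ((hR s).hasDerivAt).div_const _
      have h4 : HasDerivAt (fun y : ℝ => c/2 * y) (c/2) s := by
        simpa using (hasDerivAt_id s).const_mul (c/2)
      exact (h2.add h3).sub h4
    have anti : AntitoneOn h (Set.Ici 0) := by
      apply antitoneOn_of_deriv_nonpos (convex_Ici 0)
      · apply Continuous.continuousOn
        have : Continuous fun s => Real.sqrt (N s + ε^2) :=
          Real.continuous_sqrt.comp (hN.continuous.add continuous_const)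
        exact (this.add (hR.continuous.div_const _)).sub (continuous_const.mul continuous_id)
      · intro s hs
        rw [interior_Ici] at hs
        exact (Hs s hs).differentiableAt.differentiableWithinAt
      · intro s hs
        rw [interior_Ici] at hs
        rw [(Hs s hs).deriv]
        have hρ := hR' s hs
        have habs : |deriv R s| = -(deriv R s) := abs_of_nonpos hρ
        have hstep : deriv N s / (2 * Real.sqrt (N s + ε^2)) ≤ Real.sqrt |deriv R s| := by
          rcases le_or_gt (deriv N s) 0 with ha | ha
          · have hd0 : deriv N s / (2 * Real.sqrt (N s + ε^2)) ≤ 0 := by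
              apply div_nonpos_of_nonpos_of_nonneg ha
              positivity
            exact hd0.trans (Real.sqrt_nonneg _)
          · have hNs : 0 < N s := by
              rcases (hNpos s hs.le).lt_or_eq with hlt | heq
              · exact hlt
              · exfalso
                have hmin : IsLocalMin N s := by
                  filter_upwards [eventually_gt_nhds hs] with y hy
                  rw [← heq]; exact hNpos y hy.le
                have := hmin.deriv_eq_zero
                linarith
            have hsq : HasDerivAt (fun y => Real.sqrt (N y))
                (deriv N s / (2 * Real.sqrt (N s))) s :=
              ((hN s).hasDerivAt).sqrt hNs.ne'
            have hdN := hdiss s hs.le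
            rw [hsq.deriv] at hdN
            refine le_trans ?_ hdN
            gcongr
            nlinarith [sq_nonneg ε]
        have hs2 : Real.sqrt |deriv R s| ^ 2 = |deriv R s| :=
          Real.sq_sqrt (abs_nonneg _)
        have h5 : 2*c*Real.sqrt |deriv R s| ≤ |deriv R s| + c^2 := by
          nlinarith [sq_nonneg (Real.sqrt |deriv R s| - c)]
        have h6 : Real.sqrt |deriv R s| ≤ (|deriv R s| + c^2) / (2*c) :=
          (le_div_iff₀ (by positivity)).2 (by linarith)
        have h7 : (|deriv R s| + c^2) / (2*c) = |deriv R s|/(2*c) + c/2 := by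
          field_simp
        have h8 : deriv R s / (2*c) = -(|deriv R s| / (2*c)) := by rw [habs]; ring
        linarith
    have hTmem : (T : ℝ) ∈ Set.Ici (0:ℝ) := hT
    have htmem : (t : ℝ) ∈ Set.Ici (0:ℝ) := le_trans hT hTt
    have hht := anti hTmem htmem hTt
    simp only [hh] at hht
    have e1 : Real.sqrt (N t) ≤ Real.sqrt (N t + ε^2) :=
      Real.sqrt_le_sqrt (by nlinarith)
    have e2 : Real.sqrt (N T + ε^2) ≤ Real.sqrt (N T) + ε := by
      have h1 : N T + ε^2 ≤ (Real.sqrt (N T) + ε)^2 := by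
        nlinarith [Real.sq_sqrt (hNpos T hT), Real.sqrt_nonneg (N T)]
      calc Real.sqrt (N T + ε^2) ≤ Real.sqrt ((Real.sqrt (N T) + ε)^2) :=
            Real.sqrt_le_sqrt h1
        _ = Real.sqrt (N T) + ε := by
            rw [Real.sqrt_sq (by positivity)]
    have hsplit : (R T - R t)/(2*c) = R T/(2*c) - R t/(2*c) := by ring
    have hsplit2 : c/2*(t-T) = c/2*t - c/2*T := by ring
    linarith
  have key : ∀ T t, 0 ≤ T → T ≤ t → N t ≤ 2 * (N T + (t - T) * (R T - R t)) := by
    intro T t hT hTt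
    have ht0 : 0 ≤ t := le_trans hT hTt
    have hΔ : 0 ≤ R T - R t := sub_nonneg.2 (hRmono T t hT hTt)
    have hNT := hNpos T hT
    have hNt := hNpos t ht0
    have sT := Real.sq_sqrt hNT
    have st := Real.sq_sqrt hNt
    have sTn := Real.sqrt_nonneg (N T)
    have stn := Real.sqrt_nonneg (N t)
    rcases hΔ.lt_or_eq with hΔpos | hΔ0
    · have hlt : T < t := by
        rcases hTt.lt_or_eq with hl | hl
        · exact hl
        · exfalso; rw [hl] at hΔpos; linarith
      set c := Real.sqrt ((R T - R t)/(t - T)) with hcdef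
      have hcpos : 0 < (R T - R t)/(t - T) := div_pos hΔpos (sub_pos.2 hlt)
      have hc : 0 < c := Real.sqrt_pos.2 hcpos
      have hc2 : c^2 = (R T - R t)/(t-T) := Real.sq_sqrt hcpos.le
      have hc2' : c^2 * (t - T) = R T - R t := by
        rw [hc2, div_mul_eq_mul_div, mul_div_assoc, div_self (sub_pos.2 hlt).ne', mul_one]
      have hA := keyA c hc T t hT hTt
      have hcc : (R T - R t)/(2*c) = c/2*(t-T) := by
        rw [← hc2']; field_simp
      rw [hcc] at hA
      nlinarith [sq_nonneg (Real.sqrt (N T) - c*(t-T)), sq_nonneg (c*(t-T)),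
        sub_pos.2 hlt, hc.le]
    · have hsq : Real.sqrt (N t) ≤ Real.sqrt (N T) := by
        refine le_of_forall_pos_le_add fun ε hε => ?_
        have hden : (0:ℝ) < t - T + 1 := by linarith
        have hc : (0:ℝ) < 2*ε/(t - T + 1) := by positivity
        have hA := keyA _ hc T t hT hTt
        rw [← hΔ0] at hA
        have hz : (0:ℝ)/(2*(2*ε/(t - T + 1))) = 0 := zero_div _
        have hb : 2*ε/(t-T+1)/2*(t-T) ≤ ε := by
          have he : 2*ε/(t-T+1)/2*(t-T) = ε*(t-T)/(t-T+1) := by ring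
          rw [he, div_le_iff₀ hden]; nlinarith
        linarith
      rw [← hΔ0]
      nlinarith
  refine ⟨key, ?_⟩
  rw [NormedAddCommGroup.tendsto_nhds_zero]
  intro ε hε
  set S := R '' Set.Ici 0 with hS
  have hne : S.Nonempty := ⟨R 0, 0, Set.mem_Ici.mpr le_rfl, rfl⟩
  have hbdd : BddBelow S := ⟨0, by rintro y ⟨x, hx, rfl⟩; exact hRpos x hx⟩
  set L := sInf S with hL
  obtain ⟨y, hyS, hy⟩ := exists_lt_of_csInf_lt hne (show sInf S < L + ε/8 by rw [← hL]; linarith)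
  obtain ⟨T, hT0, rfl⟩ := hyS
  rw [Set.mem_Ici] at hT0
  filter_upwards [eventually_ge_atTop (max T (max 1 (8 * N T / ε)))] with t ht
  have htT : T ≤ t := le_trans (le_max_left _ _) ht
  have ht1 : (1:ℝ) ≤ t := le_trans (le_trans (le_max_left _ _) (le_max_right _ _)) ht
  have ht8 : 8 * N T / ε ≤ t := le_trans (le_trans (le_max_right _ _) (le_max_right _ _)) ht
  have ht0 : (0:ℝ) < t := lt_of_lt_of_le one_pos ht1
  have hRt : L ≤ R t := csInf_le hbdd ⟨t, le_trans hT0 htT, rfl⟩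
  have hkey := key T t hT0 htT
  have hp : (t - T) * (R T - R t) ≤ t * (ε/8) :=
    mul_le_mul (by linarith) (by linarith) (by linarith [hRmono T t hT0 htT]) (by linarith)
  have h8 : 8 * N T ≤ t * ε := (div_le_iff₀ hε).1 ht8
  have hNt2 : N t ≤ t * (ε/2) := by linarith
  rw [Real.norm_eq_abs, abs_of_nonneg (div_nonneg (hNpos t ht0.le) ht0.le)]
  rw [div_lt_iff₀ ht0]
  nlinarith [mul_pos ht0 hε]
end

section
/- Let ρ : ℝ^d → [0,∞) satisfy ρ(x) ≤ C(1+|x|²)^{−(d+2+ε)/2} for some C, ε > 0, and let P̄ = ρ·dx. Then the map S^d → L¹(√(1+|x|²)·P̄), (w,b) ↦ 1_{\{x : wᵀx+b>0\}} is Lipschitz continuous, i.e., there is L > 0 with ∫ |1_{\{wᵀx+b>0\}} − 1_{\{w̃ᵀx+b̃>0\}}|·√(1+|x|²)·ρ(x) dx ≤ L(|w−w̃| + |b−b̃|) for all (w,b),(w̃,b̃) ∈ S^d. -/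
/-!
The two half-spaces differ only on the slab `|⟪w, x⟫ + b| ≤ δ √(1 + ‖x‖²)`,
`δ = ‖w - w'‖ + |b - b'|`, where the weight `√(1 + ‖x‖²) ρ(x)` is at most
`C (1 + ‖x‖²)^(-(d+1)/2)`. This is the density of the gnomonic projection of the sphere: its
integral over a set `S` is `d + 1` times the volume of the part of the unit ball of `ℝᵈ × ℝ` lying
in the cone `{(τ x, τ) | x ∈ S, τ > 0}`. The cone over the slab lies in
`{z | |⟪(w, b), z⟫| ≤ δ ‖z‖}`; rotating `(w, b)` to the last basis vector, its part in the unit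
ball lies in `(unit ball of ℝᵈ) × [-δ, δ]`, of volume `O(δ)`.
-/

open MeasureTheory Set
open scoped Pointwise RealInnerProductSpace

lemma natCast_add_one_mul_lintegral_indicator_Iic_pow {a : ℝ} (ha : 0 ≤ a) (n : ℕ) :
    (n + 1) * ∫⁻ τ in Ioi 0, (Iic a).indicator (fun τ => ENNReal.ofReal (τ ^ n)) τ
      = ENNReal.ofReal (a ^ (n + 1)) := by
  rw [lintegral_indicator measurableSet_Iic, Measure.restrict_restrict measurableSet_Iic,
    inter_comm, Ioi_inter_Iic, ← ofReal_integral_eq_lintegral_ofReal,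
    ← intervalIntegral.integral_of_le ha, integral_pow, ENNReal.ofReal_div_of_pos (by positivity)]
  · rw [ENNReal.ofReal_add (by positivity) zero_le_one, ENNReal.ofReal_natCast, ENNReal.ofReal_one,
      zero_pow (Nat.succ_ne_zero n), sub_zero, ENNReal.mul_div_cancel' (by simp) (by simp)]
  · exact (continuous_pow n).integrableOn_Ioc
  · exact (ae_restrict_iff' measurableSet_Ioc).2 (.of_forall fun τ hτ => pow_nonneg hτ.1.le n)

lemma sq_mul_le_one_iff_le_inv_sqrt {τ v : ℝ} (hτ : 0 ≤ τ) (hv : 0 < v) :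
    τ ^ 2 * v ≤ 1 ↔ τ ≤ (√v)⁻¹ := by
  rw [← one_div, le_div_iff₀ (Real.sqrt_pos.2 hv), ← Real.sqrt_le_one, Real.sqrt_mul (sq_nonneg τ),
    Real.sqrt_sq hτ]

lemma inv_sqrt_pow_eq_rpow {v : ℝ} (hv : 0 ≤ v) (n : ℕ) :
    (√v)⁻¹ ^ (n + 1) = v ^ (-((n : ℝ) + 1) / 2) := by
  rw [Real.sqrt_eq_rpow, ← Real.rpow_neg hv, ← Real.rpow_natCast, ← Real.rpow_mul hv]
  push_cast
  ring_nf

lemma sqrt_mul_le_mul_rpow {v y C d ε : ℝ} (hv : 1 ≤ v) (hC : 0 ≤ C) (hε : 0 ≤ ε)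
    (hy : y ≤ C * v ^ (-(d + 2 + ε) / 2)) : √v * y ≤ C * v ^ (-(d + 1) / 2) :=
  calc √v * y ≤ C * (v ^ (1 / 2 : ℝ) * v ^ (-(d + 2 + ε) / 2)) := by
        rw [← Real.sqrt_eq_rpow]; nlinarith [Real.sqrt_nonneg v]
    _ ≤ C * v ^ (-(d + 1) / 2) := by
        rw [← Real.rpow_add (by linarith)]
        gcongr
        linarith

lemma abs_indicator_pos_sub_indicator_pos_le {α : Type*} (f g : α → ℝ) (x : α) :
    |{x | 0 < f x}.indicator (fun _ => (1 : ℝ)) x - {x | 0 < g x}.indicator (fun _ => 1) x|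
      ≤ {x | |f x| ≤ |f x - g x|}.indicator (fun _ => 1) x := by
  simp only [indicator, mem_ofPred_eq]
  split_ifs with hf hg hfg hfg hg hfg <;> norm_num
  · exact hfg (by rw [abs_of_pos hf, abs_of_nonneg (by linarith)]; linarith)
  · exact hfg (by rw [abs_of_nonpos (not_lt.1 hf), abs_of_nonpos (by linarith)]; linarith)

lemma volume_setOf_inner_norm_eq {F : Type*} [NormedAddCommGroup F] [InnerProductSpace ℝ F]
    [FiniteDimensional ℝ F] [MeasurableSpace F] [BorelSpace F] {u v : F} (huv : ‖u‖ = ‖v‖)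
    (P : ℝ → ℝ → Prop) : volume {z | P ⟪u, z⟫ ‖z‖} = volume {z | P ⟪v, z⟫ ‖z‖} := by
  set R := (ℝ ∙ (u - v))ᗮ.reflection
  have hRu : R u = v := Submodule.reflection_sub huv
  have hpre : {z | P ⟪u, z⟫ ‖z‖} = R.toHomeomorph.toMeasurableEquiv ⁻¹' {z | P ⟪v, z⟫ ‖z‖} := by
    ext z
    change P ⟪u, z⟫ ‖z‖ ↔ P ⟪v, R z⟫ ‖R z‖
    rw [← hRu, LinearIsometryEquiv.inner_map_map, LinearIsometryEquiv.norm_map]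
  rw [hpre, R.measurePreserving.measure_preimage_equiv]

section InnerProductSpace

variable {E : Type*} [NormedAddCommGroup E] [InnerProductSpace ℝ E]

lemma abs_inner_add_sub_inner_add_le (w w' x : E) (b b' : ℝ) :
    |(⟪w, x⟫ + b) - (⟪w', x⟫ + b')| ≤ (‖w - w'‖ + |b - b'|) * √(1 + ‖x‖ ^ 2) := by
  have hx : ‖x‖ ≤ √(1 + ‖x‖ ^ 2) := Real.le_sqrt_of_sq_le (by linarith)
  have h1 : 1 ≤ √(1 + ‖x‖ ^ 2) := Real.le_sqrt_of_sq_le (by nlinarith [sq_nonneg ‖x‖])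
  calc |(⟪w, x⟫ + b) - (⟪w', x⟫ + b')| = |⟪w - w', x⟫ + (b - b')| := by
        rw [inner_sub_left]; ring_nf
    _ ≤ ‖w - w'‖ * ‖x‖ + |b - b'| :=
        (abs_add_le _ _).trans (by gcongr; exact abs_real_inner_le_norm _ _)
    _ ≤ _ := by nlinarith [norm_nonneg (w - w'), abs_nonneg (b - b')]

def truncatedCone (S : Set E) : Set (E × ℝ) :=
  {p | 0 < p.2 ∧ p.2⁻¹ • p.1 ∈ S ∧ ‖p.1‖ ^ 2 + p.2 ^ 2 ≤ 1}

lemma preimage_truncatedCone {S : Set E} {τ : ℝ} (hτ : 0 < τ) :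
    (fun y => (y, τ)) ⁻¹' truncatedCone S = τ • (S ∩ {x | τ ^ 2 * (1 + ‖x‖ ^ 2) ≤ 1}) := by
  ext y
  rw [mem_smul_set_iff_inv_smul_mem₀ hτ.ne']
  simp only [truncatedCone, mem_preimage, mem_ofPred_eq, mem_inter_iff, hτ, true_and,
    norm_smul, Real.norm_eq_abs, abs_inv, abs_of_pos hτ]
  field_simp
  ring_nf

def angularSlab (w : E) (b δ : ℝ) : Set E := {x | |⟪w, x⟫ + b| ≤ δ * √(1 + ‖x‖ ^ 2)}

lemma abs_indicator_halfspace_sub_le (w w' : E) (b b' : ℝ) (x : E) :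
    |{x : E | ⟪w, x⟫ + b > 0}.indicator (fun _ => (1 : ℝ)) x
        - {x : E | ⟪w', x⟫ + b' > 0}.indicator (fun _ => 1) x|
      ≤ (angularSlab w b (‖w - w'‖ + |b - b'|)).indicator (fun _ => 1) x :=
  (abs_indicator_pos_sub_indicator_pos_le (fun x => ⟪w, x⟫ + b) (fun x => ⟪w', x⟫ + b') x).trans
    (indicator_le_indicator_of_subset (fun _ hx => hx.trans (abs_inner_add_sub_inner_add_le ..))
      (fun _ => zero_le_one) x)

lemma truncatedCone_angularSlab_subset (w : E) (b δ : ℝ) :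
    truncatedCone (angularSlab w b δ) ⊆ {p : E × ℝ | |⟪w, p.1⟫ + b * p.2|
      ≤ δ * √(‖p.1‖ ^ 2 + p.2 ^ 2) ∧ ‖p.1‖ ^ 2 + p.2 ^ 2 ≤ 1} := by
  rintro ⟨y, τ⟩ ⟨hτ : 0 < τ, hslab, hball⟩
  refine ⟨?_, hball⟩
  obtain ⟨x, rfl⟩ : ∃ x, y = τ • x := ⟨τ⁻¹ • y, (smul_inv_smul₀ hτ.ne' y).symm⟩
  rw [inv_smul_smul₀ hτ.ne'] at hslab
  calc |⟪w, τ • x⟫ + b * τ| = τ * |⟪w, x⟫ + b| := by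
        rw [inner_smul_right, ← abs_of_pos hτ, ← abs_mul, abs_of_pos hτ]; ring_nf
    _ ≤ τ * (δ * √(1 + ‖x‖ ^ 2)) := mul_le_mul_of_nonneg_left hslab hτ.le
    _ = δ * √(‖τ • x‖ ^ 2 + τ ^ 2) := by
        rw [norm_smul, Real.norm_eq_abs, abs_of_pos hτ, show (τ * ‖x‖) ^ 2 + τ ^ 2
          = τ ^ 2 * (1 + ‖x‖ ^ 2) by ring, Real.sqrt_mul (sq_nonneg τ), Real.sqrt_sq hτ.le]
        ring

variable [FiniteDimensional ℝ E] [MeasurableSpace E] [BorelSpace E]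

lemma measurableSet_truncatedCone {S : Set E} (hS : MeasurableSet S) :
    MeasurableSet (truncatedCone S) := by
  have h : Measurable fun p : E × ℝ => p.2⁻¹ • p.1 := by fun_prop
  simp only [truncatedCone, ofPred_and]
  exact (measurableSet_lt measurable_const measurable_snd).inter
    ((h hS).inter (measurableSet_le (by fun_prop) measurable_const))

lemma measurableSet_angularSlab (w : E) (b δ : ℝ) : MeasurableSet (angularSlab w b δ) :=
  measurableSet_le (f := fun x => |⟪w, x⟫ + b|) (by fun_prop) (by fun_prop)

open Module in
theorem lintegral_rpow_eq_volume_truncatedCone {S : Set E} (hS : MeasurableSet S) :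
    ∫⁻ x in S, ENNReal.ofReal ((1 + ‖x‖ ^ 2) ^ (-((finrank ℝ E : ℝ) + 1) / 2))
      = (finrank ℝ E + 1) * volume (truncatedCone S) := by
  set n := finrank ℝ E
  set G : ℝ × E → ENNReal :=
    {q | q.1 ≤ (√(1 + ‖q.2‖ ^ 2))⁻¹}.indicator fun q => ENNReal.ofReal (q.1 ^ n)
  have hG : Measurable G :=
    Measurable.indicator (by fun_prop) (measurableSet_le measurable_fst (by fun_prop))
  -- The fibre of the cone at height `τ > 0` is `τ • (S ∩ _)`, of volume `τ ^ n * volume (S ∩ _)`.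
  have hfiber : ∀ τ, volume ((fun y => (y, τ)) ⁻¹' truncatedCone S)
      = (Ioi 0).indicator (fun τ => ∫⁻ x in S, G (τ, x)) τ := by
    intro τ
    rcases le_or_gt τ 0 with hτ | hτ
    · rw [indicator_of_notMem (show τ ∉ Ioi 0 from not_lt.2 hτ)]
      convert measure_empty (μ := (volume : Measure E))
      exact eq_empty_of_forall_notMem fun y hy => hτ.not_gt hy.1
    rw [indicator_of_mem (mem_Ioi.2 hτ), preimage_truncatedCone hτ, Measure.addHaar_smul,
      abs_of_pos (pow_pos hτ n), inter_comm, ← Measure.restrict_apply' hS,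
      ← lintegral_indicator_const (measurableSet_le (by fun_prop) measurable_const)]
    refine lintegral_congr fun x => ?_
    simp only [G, indicator, mem_ofPred_eq,
      sq_mul_le_one_iff_le_inv_sqrt hτ.le (by positivity : (0 : ℝ) < 1 + ‖x‖ ^ 2)]
  calc ∫⁻ x in S, ENNReal.ofReal ((1 + ‖x‖ ^ 2) ^ (-((n : ℝ) + 1) / 2))
      = ∫⁻ x in S, (n + 1) * ∫⁻ τ in Ioi 0, G (τ, x) := by
        refine lintegral_congr fun x => ?_
        rw [← inv_sqrt_pow_eq_rpow (by positivity),
          ← natCast_add_one_mul_lintegral_indicator_Iic_pow (by positivity)]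
        rfl
    _ = (n + 1) * ∫⁻ τ in Ioi 0, ∫⁻ x in S, G (τ, x) := by
        rw [lintegral_const_mul' _ _ (by simp),
          lintegral_lintegral_swap (f := fun x τ => G (τ, x)) (hG.comp measurable_swap).aemeasurable]
    _ = (n + 1) * volume (truncatedCone S) := by
        rw [Measure.volume_eq_prod, Measure.prod_apply_symm (measurableSet_truncatedCone hS),
          ← lintegral_indicator measurableSet_Ioi]
        simp_rw [hfiber]

lemma volume_setOf_inner_add_mul_eq {w w' : E} {b b' : ℝ} (h : ‖w‖ ^ 2 + b ^ 2 = 1)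
    (h' : ‖w'‖ ^ 2 + b' ^ 2 = 1) (P : ℝ → ℝ → Prop) :
    volume {p : E × ℝ | P (⟪w, p.1⟫ + b * p.2) (‖p.1‖ ^ 2 + p.2 ^ 2)}
      = volume {p : E × ℝ | P (⟪w', p.1⟫ + b' * p.2) (‖p.1‖ ^ 2 + p.2 ^ 2)} := by
  have hL2 := WithLp.volume_preserving_symm_measurableEquiv_toLp_prod E ℝ
  have key : ∀ (w : E) (b : ℝ), volume {p : E × ℝ | P (⟪w, p.1⟫ + b * p.2) (‖p.1‖ ^ 2 + p.2 ^ 2)}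
      = volume {z : WithLp 2 (E × ℝ) | P ⟪WithLp.toLp 2 (w, b), z⟫ (‖z‖ ^ 2)} := by
    intro w b
    rw [← hL2.measure_preimage_equiv]
    congr 1
    ext z
    simp [WithLp.prod_norm_sq_eq_of_L2, mul_comm]
  have hnorm : ‖WithLp.toLp 2 (w, b)‖ = ‖WithLp.toLp 2 (w', b')‖ := by
    rw [← sq_eq_sq₀ (norm_nonneg _) (norm_nonneg _), WithLp.prod_norm_sq_eq_of_L2,
      WithLp.prod_norm_sq_eq_of_L2]
    simpa [h] using h'.symm
  rw [key, key, volume_setOf_inner_norm_eq hnorm (fun s r => P s (r ^ 2))]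

lemma volume_cone_inter_ball_le {w : E} {b δ : ℝ} (h : ‖w‖ ^ 2 + b ^ 2 = 1) (hδ : 0 ≤ δ) :
    volume {p : E × ℝ | |⟪w, p.1⟫ + b * p.2| ≤ δ * √(‖p.1‖ ^ 2 + p.2 ^ 2)
      ∧ ‖p.1‖ ^ 2 + p.2 ^ 2 ≤ 1} ≤ volume (Metric.closedBall (0 : E) 1) * ENNReal.ofReal (2 * δ) := by
  rw [volume_setOf_inner_add_mul_eq (w' := 0) (b' := 1) h (by simp)
    (fun s q => |s| ≤ δ * √q ∧ q ≤ 1), Measure.volume_eq_prod]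
  calc _ ≤ (volume.prod volume) (Metric.closedBall (0 : E) 1 ×ˢ Icc (-δ) δ) := by
        refine measure_mono fun p ⟨hτ, hq⟩ => ⟨?_, abs_le.1 ?_⟩
        · rw [mem_closedBall_zero_iff, ← sq_le_one_iff₀ (norm_nonneg _)]
          nlinarith [sq_nonneg p.2]
        · simp only [inner_zero_left, one_mul, zero_add] at hτ
          calc |p.2| ≤ δ * √(‖p.1‖ ^ 2 + p.2 ^ 2) := hτ
            _ ≤ δ * 1 := by gcongr; exact Real.sqrt_le_one.2 hq
            _ = δ := mul_one δ
    _ = _ := by rw [Measure.prod_prod, Real.volume_Icc]; ring_nf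

open Module in
theorem setIntegral_angularSlab_le {w : E} {b δ : ℝ} (h : ‖w‖ ^ 2 + b ^ 2 = 1) (hδ : 0 ≤ δ) :
    ∫ x in angularSlab w b δ, (1 + ‖x‖ ^ 2) ^ (-((finrank ℝ E : ℝ) + 1) / 2)
      ≤ 2 * (finrank ℝ E + 1) * (volume (Metric.closedBall (0 : E) 1)).toReal * δ := by
  have hS := measurableSet_angularSlab w b δ
  have hball : volume (Metric.closedBall (0 : E) 1) ≠ ⊤ := measure_closedBall_lt_top.ne
  have hlint : ∫⁻ x in angularSlab w b δ,
        ENNReal.ofReal ((1 + ‖x‖ ^ 2) ^ (-((finrank ℝ E : ℝ) + 1) / 2))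
      ≤ (finrank ℝ E + 1) * (volume (Metric.closedBall (0 : E) 1) * ENNReal.ofReal (2 * δ)) := by
    rw [lintegral_rpow_eq_volume_truncatedCone hS]
    gcongr
    exact (measure_mono (truncatedCone_angularSlab_subset w b δ)).trans
      (volume_cone_inter_ball_le h hδ)
  rw [integral_eq_lintegral_of_nonneg_ae (.of_forall fun x => by positivity)
    (by fun_prop : Measurable fun x : E => _).aestronglyMeasurable]
  refine (ENNReal.toReal_mono (by finiteness) hlint).trans_eq ?_
  rw [ENNReal.toReal_mul, ENNReal.toReal_mul, ENNReal.toReal_ofReal (by positivity),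
    ENNReal.toReal_add (by simp) (by simp), ENNReal.toReal_natCast, ENNReal.toReal_one]
  ring

end InnerProductSpace

theorem halfspace_indicator_lipschitz_general (d : ℕ) (ρ : EuclideanSpace ℝ (Fin d) → ℝ)
    (hρpos : ∀ x, 0 ≤ ρ x)
    (C ε : ℝ) (hC : 0 < C) (hε : 0 < ε)
    (hdecay : ∀ x, ρ x ≤ C * (1 + ‖x‖ ^ 2) ^ (-((d : ℝ) + 2 + ε) / 2)) :
    ∃ L > 0, ∀ (w w' : EuclideanSpace ℝ (Fin d)) (b b' : ℝ),
      ‖w‖ ^ 2 + b ^ 2 = 1 → ‖w'‖ ^ 2 + b' ^ 2 = 1 →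
      ∫ x, |Set.indicator {x : EuclideanSpace ℝ (Fin d) | inner ℝ w x + b > 0}
              (fun _ => (1 : ℝ)) x
            - Set.indicator {x : EuclideanSpace ℝ (Fin d) | inner ℝ w' x + b' > 0}
              (fun _ => (1 : ℝ)) x|
          * Real.sqrt (1 + ‖x‖ ^ 2) * ρ x
        ≤ L * (‖w - w'‖ + |b - b'|) := by
  set K := 2 * (d + 1) * (volume (Metric.closedBall (0 : EuclideanSpace ℝ (Fin d)) 1)).toReal
  have hK : 0 < K := by
    have := ENNReal.toReal_pos (Metric.measure_closedBall_pos volume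
      (0 : EuclideanSpace ℝ (Fin d)) one_pos).ne' measure_closedBall_lt_top.ne
    positivity
  refine ⟨C * K, by positivity, fun w w' b b' hw _ => ?_⟩
  set S := angularSlab w b (‖w - w'‖ + |b - b'|)
  set weight := fun x : EuclideanSpace ℝ (Fin d) => (1 + ‖x‖ ^ 2) ^ (-((d : ℝ) + 1) / 2)
  have hS := measurableSet_angularSlab w b (‖w - w'‖ + |b - b'|)
  calc _ ≤ ∫ x, C * S.indicator weight x := by
        refine integral_mono_of_nonneg (.of_forall fun x => by have := hρpos x; positivity)
          (((integrable_rpow_neg_one_add_norm_sq (by simp)).indicator hS).const_mul C)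
          (.of_forall fun x => ?_)
        calc _ = _ * (√(1 + ‖x‖ ^ 2) * ρ x) := mul_assoc _ _ _
          _ ≤ S.indicator (fun _ => 1) x * (C * weight x) :=
              mul_le_mul (abs_indicator_halfspace_sub_le w w' b b' x)
                (sqrt_mul_le_mul_rpow (by nlinarith [sq_nonneg ‖x‖]) hC.le hε.le (hdecay x))
                (by have := hρpos x; positivity) (indicator_nonneg (by simp) x)
          _ = C * S.indicator weight x := by by_cases hx : x ∈ S <;> simp [hx]
    _ = C * ∫ x in S, weight x := by rw [integral_const_mul, integral_indicator hS]
    _ ≤ C * (K * (‖w - w'‖ + |b - b'|)) := by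
        gcongr
        simpa only [finrank_euclideanSpace_fin] using setIntegral_angularSlab_le hw (by positivity)
    _ = C * K * (‖w - w'‖ + |b - b'|) := by ring

/-- If `ρ(x) ≤ C(1+|x|²)^{-(d+2+ε)/2}`, then for the data distribution
`P̄ = ρ·dx` the map `(w,b) ↦ 1_{{wᵀx+b>0}}` from `S^d ⊂ ℝ^d × ℝ` to
`L¹(√(1+|x|²)·P̄)` is Lipschitz continuous. -/
theorem halfspace_indicator_lipschitz (d : ℕ) (ρ : EuclideanSpace ℝ (Fin d) → ℝ)
    (hρmeas : Measurable ρ) (hρpos : ∀ x, 0 ≤ ρ x)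
    (C ε : ℝ) (hC : 0 < C) (hε : 0 < ε)
    (hdecay : ∀ x, ρ x ≤ C * (1 + ‖x‖ ^ 2) ^ (-((d : ℝ) + 2 + ε) / 2)) :
    ∃ L > 0, ∀ (w w' : EuclideanSpace ℝ (Fin d)) (b b' : ℝ),
      ‖w‖ ^ 2 + b ^ 2 = 1 → ‖w'‖ ^ 2 + b' ^ 2 = 1 →
      ∫ x, |Set.indicator {x : EuclideanSpace ℝ (Fin d) | inner ℝ w x + b > 0}
              (fun _ => (1 : ℝ)) x
            - Set.indicator {x : EuclideanSpace ℝ (Fin d) | inner ℝ w' x + b' > 0}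
              (fun _ => (1 : ℝ)) x|
          * Real.sqrt (1 + ‖x‖ ^ 2) * ρ x
        ≤ L * (‖w - w'‖ + |b - b'|) :=
  halfspace_indicator_lipschitz_general d ρ hρpos C ε hC hε hdecay
end
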